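/- For every integer n ≥ 3 and every complex number z with |z| ≤ 1/n, we have 2(1−(n−1)z)(1+z+z²+z³) + n(n−1)z⁴ ≠ 0. -/

import Mathlib

/-!
Write the denominator as `2AB + n(n-1)z⁴` with `A = 1 - (n-1)z` and `B = 1 + z + z² + z³`.
For `‖z‖ ≤ 1/n` the reverse triangle inequality gives `‖A‖ ≥ 1/n`, and, since `n ≥ 3` forces
`‖z‖ ≤ 1/3`, also `‖B‖ ≥ 1 - 1/3 - 1/9 - 1/27 = 14/27`. Hence `‖2AB‖ ≥ 28/(27n)`, which strictly
exceeds `‖n(n-1)z⁴‖ ≤ (n-1)/n³`, so the sum cannot vanish.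
-/

theorem one_sub_norm_add_sq_add_cube_le {R : Type*} [SeminormedRing R] [NormOneClass R] (z : R) :
    1 - (‖z‖ + ‖z‖ ^ 2 + ‖z‖ ^ 3) ≤ ‖1 + z + z ^ 2 + z ^ 3‖ := by
  have htail : ‖z + z ^ 2 + z ^ 3‖ ≤ ‖z‖ + ‖z‖ ^ 2 + ‖z‖ ^ 3 :=
    norm_add₃_le.trans (by gcongr <;> exact norm_pow_le z _)
  have hrev := norm_sub_le_norm_add (1 : R) (z + z ^ 2 + z ^ 3)
  rw [norm_one, ← add_assoc, ← add_assoc] at hrev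
  linarith

theorem norm_one_add_add_sq_add_cube_ge {R : Type*} [SeminormedRing R] [NormOneClass R] {z : R}
    (hz : ‖z‖ ≤ 1 / 3) : 14 / 27 ≤ ‖1 + z + z ^ 2 + z ^ 3‖ := by
  have h2 : ‖z‖ ^ 2 ≤ (1 / 3) ^ 2 := pow_le_pow_left₀ (norm_nonneg z) hz 2
  have h3 : ‖z‖ ^ 3 ≤ (1 / 3) ^ 3 := pow_le_pow_left₀ (norm_nonneg z) hz 3
  linarith [one_sub_norm_add_sq_add_cube_le z]

section RCLike

variable {𝕜 : Type*} [RCLike 𝕜]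

theorem RCLike.norm_natCast_sub_one {n : ℕ} (hn : 1 ≤ n) : ‖(n : 𝕜) - 1‖ = n - 1 := by
  rw [← Nat.cast_pred hn, RCLike.norm_natCast, Nat.cast_pred hn]

theorem inv_le_norm_one_sub_natCast_sub_one_mul {n : ℕ} (hn : 1 ≤ n) {z : 𝕜}
    (hz : ‖z‖ ≤ 1 / n) : 1 / n ≤ ‖1 - ((n : 𝕜) - 1) * z‖ := by
  have hn' : (1 : ℝ) ≤ n := by exact_mod_cast hn
  have hmul : ‖((n : 𝕜) - 1) * z‖ ≤ 1 - 1 / n := by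
    rw [norm_mul, RCLike.norm_natCast_sub_one hn]
    calc ((n : ℝ) - 1) * ‖z‖ ≤ (n - 1) * (1 / n) := by gcongr
      _ = 1 - 1 / n := by field_simp
  have hrev := norm_sub_norm_le (1 : 𝕜) (((n : 𝕜) - 1) * z)
  rw [norm_one] at hrev
  linarith

theorem norm_natCast_mul_natCast_sub_one_mul_pow_four_le {n : ℕ} (hn : 1 ≤ n) {z : 𝕜}
    (hz : ‖z‖ ≤ 1 / n) : ‖(n : 𝕜) * ((n : 𝕜) - 1) * z ^ 4‖ ≤ ((n : ℝ) - 1) / n ^ 3 := by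
  have hn' : (1 : ℝ) ≤ n := by exact_mod_cast hn
  rw [norm_mul, norm_mul, norm_pow, RCLike.norm_natCast, RCLike.norm_natCast_sub_one hn]
  calc (n : ℝ) * (n - 1) * ‖z‖ ^ 4 ≤ (n : ℝ) * (n - 1) * (1 / n) ^ 4 := by
        gcongr
    _ = ((n : ℝ) - 1) / n ^ 3 := by field_simp

end RCLike

/-- For every integer `n ≥ 3` and every complex `z` with `|z| ≤ 1/n`, the denominator
`2(1−(n−1)z)(1+z+z²+z³) + n(n−1)z⁴` of the Poincaré series of the Coxeter group whose
diagram is the complete graph on `n` vertices with all edges labeled `4` does not vanish. -/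
theorem poincare_denominator_ne_zero_on_disc
    (n : ℕ) (hn : 3 ≤ n) (z : ℂ) (hz : ‖z‖ ≤ 1 / n) :
    2 * (1 - ((n : ℂ) - 1) * z) * (1 + z + z ^ 2 + z ^ 3)
      + (n : ℂ) * ((n : ℂ) - 1) * z ^ 4 ≠ 0 := by
  have hn' : (3 : ℝ) ≤ n := by exact_mod_cast hn
  have hA := inv_le_norm_one_sub_natCast_sub_one_mul (by omega : 1 ≤ n) hz
  have hB : 14 / 27 ≤ ‖1 + z + z ^ 2 + z ^ 3‖ :=
    norm_one_add_add_sq_add_cube_ge (hz.trans (by gcongr))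
  have hC := norm_natCast_mul_natCast_sub_one_mul_pow_four_le (by omega : 1 ≤ n) hz
  have hmain : ‖(n : ℂ) * ((n : ℂ) - 1) * z ^ 4‖
      < ‖2 * (1 - ((n : ℂ) - 1) * z) * (1 + z + z ^ 2 + z ^ 3)‖ := by
    rw [norm_mul (2 * _), norm_mul 2, Complex.norm_two]
    calc ‖(n : ℂ) * ((n : ℂ) - 1) * z ^ 4‖ ≤ (n - 1) / n ^ 3 := hC
      _ < 2 * (1 / n) * (14 / 27) := by
        rw [div_lt_iff₀ (by positivity)]
        field_simp
        nlinarith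
      _ ≤ _ := by gcongr
  intro hsum
  rw [add_eq_zero_iff_eq_neg.mp hsum, norm_neg] at hmain
  exact lt_irrefl _ hmain
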